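/- In the partition refinement sequence of an RBR graph, two nodes lie in the same block of the i-th partition if and only if they have the same belief hierarchy bounded by length i: ℙ^i(n) = ℙ^i(n') if and only if Ψ_n^i = Ψ_{n'}^i, for every i ≥ 1. -/
import Mathlib


/-- The partition refinement sequence on the node set of a labelled digraph,
presented as the corresponding sequence of equivalence relations:
`PRel E lab i n n'` holds iff `n` and `n'` lie in the same block of the
partition `ℙ^i`. `ℙ^1` groups nodes with equal labels, and `ℙ^i` (for
`i ≥ 2`) refines `ℙ^{i−1}` by the set of `ℙ^{i−1}`-blocks containing
out-neighbours. -/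
def PRel {A : Type} {Node : Type} (E : Node → Node → Prop) (lab : Node → A) :
    ℕ → Node → Node → Prop
  | 0, _, _ => True
  | 1, n, n' => lab n = lab n'
  | i + 2, n, n' => PRel E lab (i + 1) n n' ∧
      (∀ m, E n m → ∃ m', E n' m' ∧ PRel E lab (i + 1) m m') ∧
      (∀ m', E n' m' → ∃ m, E n m ∧ PRel E lab (i + 1) m m')

/-- `PiSet E lab i n` is the set of belief sequences of paths of length `i`
starting at node `n` in the RBR graph `(E, lab)`. -/
def PiSet {A : Type} {Node : Type} (E : Node → Node → Prop) (lab : Node → A) :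
    ℕ → Node → Set (List A)
  | 0, _ => ∅
  | 1, n => {[lab n]}
  | i + 2, n => {l | ∃ m, E n m ∧ ∃ σ ∈ PiSet E lab (i + 1) m, l = lab n :: σ}

/-- `PsiSet E lab j n` is the set of belief sequences of paths of length at
most `j` starting at node `n`. -/
def PsiSet {A : Type} {Node : Type} (E : Node → Node → Prop) (lab : Node → A)
    (j : ℕ) (n : Node) : Set (List A) :=
  {l | ∃ i, 0 < i ∧ i ≤ j ∧ l ∈ PiSet E lab i n}

/-- `PsiStar E lab n` is the set of belief sequences of all paths starting
at node `n` — the full belief hierarchy of node `n`. -/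
def PsiStar {A : Type} {Node : Type} (E : Node → Node → Prop) (lab : Node → A)
    (n : Node) : Set (List A) :=
  {l | ∃ i, l ∈ PiSet E lab i n}

section Aux
variable {A : Type} {Node : Type} (E : Node → Node → Prop) (lab : Node → A)

theorem piSet_length : ∀ (k : ℕ) (n : Node) (σ : List A), σ ∈ PiSet E lab k n → σ.length = k
  | 0, _, _, h => h.elim
  | 1, n, σ, h => by simp only [PiSet, Set.mem_singleton_iff] at h; subst h; rfl
  | k + 2, n, σ, h => by
      obtain ⟨m, hm, τ, hτ, rfl⟩ := h
      simp [piSet_length (k+1) m τ hτ]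

theorem piSet_head : ∀ (k : ℕ), 1 ≤ k → ∀ (n : Node) (σ : List A),
    σ ∈ PiSet E lab k n → ∃ t, σ = lab n :: t
  | 1, _, n, σ, h => by
      simp only [PiSet, Set.mem_singleton_iff] at h; exact ⟨[], h⟩
  | k + 2, _, n, σ, h => by
      obtain ⟨m, hm, τ, hτ, rfl⟩ := h; exact ⟨τ, rfl⟩

theorem piSet_succ (k : ℕ) (hk : 1 ≤ k) (n : Node) :
    PiSet E lab (k+1) n = {l | ∃ m, E n m ∧ ∃ σ ∈ PiSet E lab k m, l = lab n :: σ} := by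
  obtain ⟨j, rfl⟩ : ∃ j, k = j + 1 := ⟨k - 1, (Nat.succ_pred_eq_of_pos hk).symm⟩
  rfl

theorem prel_mono : ∀ (i : ℕ) (n n' : Node), PRel E lab (i+1) n n' → PRel E lab i n n'
  | 0, _, _, _ => trivial
  | _ + 1, _, _, h => h.1

theorem prel_le {k i : ℕ} (hk : k ≤ i) (n n' : Node) (h : PRel E lab i n n') :
    PRel E lab k n n' := by
  induction i with
  | zero => exact (Nat.le_zero.mp hk) ▸ h
  | succ j ih =>
    rcases Nat.lt_or_ge k (j+1) with h' | h'
    · exact ih (Nat.lt_succ_iff.mp h') (prel_mono E lab j n n' h)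
    · exact (le_antisymm hk h') ▸ h

theorem prel_symm : ∀ (i : ℕ) (n n' : Node), PRel E lab i n n' → PRel E lab i n' n
  | 0, _, _, _ => trivial
  | 1, _, _, h => h.symm
  | i + 2, n, n', ⟨h1, h2, h3⟩ =>
    ⟨prel_symm (i+1) n n' h1,
     fun m' hm' => by obtain ⟨m, hm, hr⟩ := h3 m' hm'; exact ⟨m, hm, prel_symm (i+1) m m' hr⟩,
     fun m hm => by obtain ⟨m', hm', hr⟩ := h2 m hm; exact ⟨m', hm', prel_symm (i+1) m m' hr⟩⟩

theorem prel_lab {i : ℕ} (hi : 1 ≤ i) (n n' : Node) (h : PRel E lab i n n') :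
    lab n = lab n' := prel_le E lab hi n n' h

theorem prel_piSet : ∀ (i : ℕ) (n n' : Node), PRel E lab i n n' →
    PiSet E lab i n = PiSet E lab i n'
  | 0, _, _, _ => rfl
  | 1, n, n', h => by
      have : ({[lab n]} : Set (List A)) = {[lab n']} := by rw [h]
      exact this
  | i + 2, n, n', h => by
      obtain ⟨h1, h2, h3⟩ := h
      have hlab : lab n = lab n' :=
        prel_lab E lab (i := i+2) (by omega) n n' ⟨h1, h2, h3⟩
      ext σ
      constructor
      · rintro ⟨m, hm, τ, hτ, rfl⟩
        obtain ⟨m', hm', hr⟩ := h2 m hm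
        exact ⟨m', hm', τ, (prel_piSet (i+1) m m' hr) ▸ hτ, by rw [hlab]⟩
      · rintro ⟨m', hm', τ, hτ, rfl⟩
        obtain ⟨m, hm, hr⟩ := h3 m' hm'
        exact ⟨m, hm, τ, (prel_piSet (i+1) m m' hr).symm ▸ hτ, by rw [hlab]⟩

variable (out_inj : ∀ n m₁ m₂, E n m₁ → E n m₂ → lab m₁ = lab m₂ → m₁ = m₂)

include out_inj in
theorem succ_match {i : ℕ} {n n' : Node}
    (H : ∀ k, 1 ≤ k → k ≤ i + 2 → PiSet E lab k n = PiSet E lab k n')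
    (m : Node) (hm : E n m) :
    ∃ m', E n' m' ∧ ∀ k, 1 ≤ k → k ≤ i + 1 → PiSet E lab k m = PiSet E lab k m' := by
  have h2mem : [lab n, lab m] ∈ PiSet E lab 2 n := ⟨m, hm, [lab m], rfl, rfl⟩
  rw [H 2 (by omega) (by omega)] at h2mem
  obtain ⟨m', hm', σ', hσ', heq⟩ := h2mem
  simp only [PiSet, Set.mem_singleton_iff] at hσ'
  subst hσ'
  have hlabm : lab m = lab m' :=
    (List.cons_eq_cons.mp (List.cons_eq_cons.mp heq).2).1
  refine ⟨m', hm', fun k hk1 hk2 => ?_⟩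
  ext σ
  constructor
  · intro hσ
    have hmem : lab n :: σ ∈ PiSet E lab (k+1) n := by
      rw [piSet_succ E lab k hk1]; exact ⟨m, hm, σ, hσ, rfl⟩
    rw [H (k+1) (by omega) (by omega), piSet_succ E lab k hk1] at hmem
    obtain ⟨m'', hm'', σ'', hσ'', heq'⟩ := hmem
    have : σ = σ'' := (List.cons_eq_cons.mp heq').2
    subst this
    obtain ⟨t, ht⟩ := piSet_head E lab k hk1 m σ hσ
    obtain ⟨t', ht'⟩ := piSet_head E lab k hk1 m'' σ hσ''
    have : lab m'' = lab m' := by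
      rw [ht] at ht'; injection ht' with h' _; rw [← h', ← hlabm]
    rwa [out_inj n' m'' m' hm'' hm' this] at hσ''
  · intro hσ
    have hmem : lab n' :: σ ∈ PiSet E lab (k+1) n' := by
      rw [piSet_succ E lab k hk1]; exact ⟨m', hm', σ, hσ, rfl⟩
    rw [← H (k+1) (by omega) (by omega), piSet_succ E lab k hk1] at hmem
    obtain ⟨m₀, hm₀, σ₀, hσ₀, heq'⟩ := hmem
    have : σ = σ₀ := (List.cons_eq_cons.mp heq').2
    subst this
    obtain ⟨t, ht⟩ := piSet_head E lab k hk1 m' σ hσ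
    obtain ⟨t', ht'⟩ := piSet_head E lab k hk1 m₀ σ hσ₀
    have : lab m₀ = lab m := by
      rw [ht] at ht'; injection ht' with h' _; rw [← h', ← hlabm]
    rwa [out_inj n m₀ m hm₀ hm this] at hσ₀

include out_inj in
theorem piSets_prel : ∀ (i : ℕ), 1 ≤ i → ∀ (n n' : Node),
    (∀ k, 1 ≤ k → k ≤ i → PiSet E lab k n = PiSet E lab k n') → PRel E lab i n n'
  | 1, _, n, n', H => by
      have h := H 1 le_rfl le_rfl
      have : [lab n] ∈ PiSet E lab 1 n' := by rw [← h]; rfl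
      simp only [PiSet, Set.mem_singleton_iff] at this
      injection this
  | i + 2, _, n, n', H => by
      refine ⟨piSets_prel (i+1) (by omega) n n'
        (fun k hk1 hk2 => H k hk1 (by omega)), fun m hm => ?_, fun m' hm' => ?_⟩
      · obtain ⟨m', hm', hpi⟩ := succ_match E lab out_inj H m hm
        exact ⟨m', hm', piSets_prel (i+1) (by omega) m m' hpi⟩
      · obtain ⟨m, hm, hpi⟩ := succ_match E lab out_inj
          (fun k hk1 hk2 => (H k hk1 hk2).symm) m' hm'
        exact ⟨m, hm, prel_symm E lab (i+1) m' m (piSets_prel (i+1) (by omega) m' m hpi)⟩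

end Aux

/-- two nodes lie in the same block of the `i`-th partition of
the refinement sequence iff they have the same belief hierarchy bounded by
length `i`: `ℙ^i(n) = ℙ^i(n') ↔ Ψ_n^i = Ψ_{n'}^i` for every `i ≥ 1`. -/
theorem prel_iff_psiSet_eq {A : Type} {Node : Type} [Fintype Node]
    (E : Node → Node → Prop) (lab : Node → A)
    (lab_ne : ∀ n m, E n m → lab n ≠ lab m)
    (out_inj : ∀ n m₁ m₂, E n m₁ → E n m₂ → lab m₁ = lab m₂ → m₁ = m₂)
    (i : ℕ) (hi : 1 ≤ i) (n n' : Node) :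
    PRel E lab i n n' ↔ PsiSet E lab i n = PsiSet E lab i n' := by
  constructor
  · intro h
    ext σ
    constructor
    · rintro ⟨k, hk0, hki, hσ⟩
      exact ⟨k, hk0, hki, (prel_piSet E lab k n n' (prel_le E lab hki n n' h)) ▸ hσ⟩
    · rintro ⟨k, hk0, hki, hσ⟩
      exact ⟨k, hk0, hki,
        (prel_piSet E lab k n' n (prel_le E lab hki n' n (prel_symm E lab i n n' h))) ▸ hσ⟩
  · intro h
    apply piSets_prel E lab out_inj i hi
    intro k hk1 hk2
    ext σ
    constructor
    · intro hσ
      have : σ ∈ PsiSet E lab i n := ⟨k, hk1, hk2, hσ⟩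
      rw [h] at this
      obtain ⟨k', hk0', hki', hσ'⟩ := this
      have : k' = k := by
        rw [← piSet_length E lab k' n' σ hσ', piSet_length E lab k n σ hσ]
      exact this ▸ hσ'
    · intro hσ
      have : σ ∈ PsiSet E lab i n' := ⟨k, hk1, hk2, hσ⟩
      rw [← h] at this
      obtain ⟨k', hk0', hki', hσ'⟩ := this
      have : k' = k := by
        rw [← piSet_length E lab k' n σ hσ', piSet_length E lab k n' σ hσ]
      exact this ▸ hσ'
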